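/- arXiv:1901.00819 — 4 statements merged into one kernel-verified Lean document; each statement's English description precedes it below -/
import Mathlib

section
/- For every integer n ≥ 2, every scale s > 0, all points x₁, …, xₙ ∈ ℝ² and all charges σ₁, …, σₙ ∈ {−1, 1}, the total interaction energy satisfies ∑_{1 ≤ i < j ≤ n} σᵢ σⱼ h(|xᵢ − xⱼ|/s) ≥ −(1/2)·(n − |∑_{j=1}^{n} σⱼ|). -/
/-!
Put a closed disc `Bⱼ` of radius `s/2` around each `xⱼ`. Two such discs whose centres are at
distance `d` meet in a lens of area `π (s/2)² h(d/s)`, so the integer-valued charge density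
`f = ∑ⱼ σⱼ 𝟙_{Bⱼ}` has `∫ f = π (s/2)² ∑ⱼ σⱼ` and `∫ f² = π (s/2)² ∑_{i,j} σᵢ σⱼ h(|xᵢ - xⱼ|/s)`.
As `|f| ≤ f²` pointwise, `|∑ⱼ σⱼ| ≤ ∑_{i,j} σᵢ σⱼ h(|xᵢ - xⱼ|/s)`, and the diagonal of the
double sum contributes exactly `n`.
-/

open Real

/-- The two-dimensional Euclid's hat function:
`h w = (2/π)(arccos w − w√(1−w²))` for `0 ≤ w ≤ 1` and `h w = 0` for `w > 1`. -/
noncomputable def euclidHat (w : ℝ) : ℝ :=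
  if w ≤ 1 then (2 / π) * (Real.arccos w - w * Real.sqrt (1 - w ^ 2)) else 0

open MeasureTheory Metric Set intervalIntegral

theorem integral_sqrt_one_sub_sq_of_mem_Icc {w : ℝ} (hw : w ∈ Icc (-1 : ℝ) 1) :
    ∫ u in w..1, √(1 - u ^ 2) = (arccos w - w * √(1 - w ^ 2)) / 2 := by
  have hsubst := integral_deriv_smul_comp (f := cos) (a := 0) (b := arccos w)
    (g := fun u => √(1 - u ^ 2)) (fun x _ => hasDerivAt_cos x) (by fun_prop) (by fun_prop)
  rw [cos_zero, cos_arccos hw.1 hw.2] at hsubst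
  have hsin : ∀ θ ∈ uIcc 0 (arccos w),
      (-sin θ) • ((fun u => √(1 - u ^ 2)) ∘ cos) θ = -sin θ ^ 2 := by
    intro θ hθ
    rw [uIcc_of_le (arccos_nonneg w)] at hθ
    have : 0 ≤ sin θ := sin_nonneg_of_nonneg_of_le_pi hθ.1 (hθ.2.trans (arccos_le_pi w))
    simp only [Function.comp, smul_eq_mul, ← sin_sq, sqrt_sq this]
    ring
  rw [integral_congr hsin, intervalIntegral.integral_neg, integral_sin_sq] at hsubst
  rw [integral_symm, ← hsubst, sin_arccos, cos_arccos hw.1 hw.2, sin_zero, cos_zero]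
  ring

theorem euclidHat_eq_integral {w : ℝ} (hw : w ∈ Icc (-1 : ℝ) 1) :
    euclidHat w = 4 / π * ∫ u in w..1, √(1 - u ^ 2) := by
  rw [euclidHat, if_pos hw.2, integral_sqrt_one_sub_sq_of_mem_Icc hw]
  ring

theorem euclidHat_nonneg (w : ℝ) : 0 ≤ euclidHat w := by
  rcases lt_or_ge w (-1) with hw | hw
  · rw [euclidHat, if_pos (by linarith), arccos_of_le_neg_one hw.le,
      sqrt_eq_zero'.mpr (by nlinarith)]
    simp
  rcases le_or_gt w 1 with hw' | hw'
  · rw [euclidHat_eq_integral ⟨hw, hw'⟩]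
    exact mul_nonneg (by positivity) (integral_nonneg hw' fun u _ => sqrt_nonneg _)
  · simp [euclidHat, not_le.mpr hw']

theorem euclidHat_zero : euclidHat 0 = 1 := by
  simp [euclidHat, pi_ne_zero]

theorem integral_sqrt_sq_sub_sq {r c : ℝ} (hr : 0 < r) (hc : c ∈ Icc (-r) r) :
    ∫ t in c..r, √(r ^ 2 - t ^ 2) = π * r ^ 2 / 4 * euclidHat (c / r) := by
  have hw : c / r ∈ Icc (-1 : ℝ) 1 := by
    constructor
    · rw [le_div_iff₀ hr]; linarith [hc.1]
    · rw [div_le_one hr]; exact hc.2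
  have hscale : ∀ u, √(r ^ 2 - (r * u) ^ 2) = r * √(1 - u ^ 2) := by
    intro u
    rw [show r ^ 2 - (r * u) ^ 2 = r ^ 2 * (1 - u ^ 2) by ring, sqrt_mul (sq_nonneg r),
      sqrt_sq hr.le]
  have := integral_comp_mul_left (fun t => √(r ^ 2 - t ^ 2)) hr.ne' (a := c / r) (b := 1)
  simp only [hscale, intervalIntegral.integral_const_mul, mul_div_cancel₀ c hr.ne', mul_one,
    smul_eq_mul, eq_inv_mul_iff_mul_eq₀ hr.ne'] at this
  rw [← this, euclidHat_eq_integral hw]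
  field_simp

theorem integral_sqrt_sq_sub_sq_abs_add {r c : ℝ} (hr : 0 ≤ r) (hcr : c ≤ r) :
    ∫ a, √(r ^ 2 - (|a| + c) ^ 2) = 2 * ∫ t in c..r, √(r ^ 2 - t ^ 2) := by
  have hvanish : ∀ a ∈ Ioi (0 : ℝ) \ Ioc 0 (r - c), √(r ^ 2 - (a + c) ^ 2) = 0 := by
    rintro a ⟨ha, ha'⟩
    have : r - c < a := by simp_all
    exact sqrt_eq_zero'.mpr (by nlinarith)
  rw [integral_comp_abs (f := fun a => √(r ^ 2 - (a + c) ^ 2)),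
    setIntegral_eq_of_subset_of_forall_sdiff_eq_zero measurableSet_Ioi Ioc_subset_Ioi_self hvanish,
    ← intervalIntegral.integral_of_le (by linarith), intervalIntegral.integral_comp_add_right
      (fun t => √(r ^ 2 - t ^ 2)), zero_add, sub_add_cancel]

theorem volume_setOf_sq_le (k : ℝ) : volume {b : ℝ | b ^ 2 ≤ k} = ENNReal.ofReal (2 * √k) := by
  rcases lt_or_ge k 0 with hk | hk
  · have : {b : ℝ | b ^ 2 ≤ k} = ∅ := eq_empty_of_forall_notMem fun b hb => by
      nlinarith [sq_nonneg b, hb.out]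
    simp [this, sqrt_eq_zero'.mpr hk.le]
  · have : {b : ℝ | b ^ 2 ≤ k} = closedBall 0 √k := by
      ext b
      rw [mem_closedBall_zero_iff, norm_eq_abs, le_sqrt (abs_nonneg b) hk, sq_abs]
      rfl
    rw [this, Real.volume_closedBall]

theorem Complex.mem_closedBall_neg_inter_closedBall_iff {r c : ℝ} (hr : 0 ≤ r) (hc : 0 ≤ c)
    (z : ℂ) : z ∈ closedBall (-c : ℂ) r ∩ closedBall (c : ℂ) r ↔
      z.im ^ 2 ≤ r ^ 2 - (|z.re| + c) ^ 2 := by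
  simp only [mem_inter_iff, mem_closedBall, Complex.dist_eq_re_im, sqrt_le_left hr,
    Complex.neg_re, Complex.ofReal_re, Complex.neg_im, Complex.ofReal_im, neg_zero, sub_zero,
    sub_neg_eq_add]
  rcases abs_cases z.re with ⟨h, _⟩ | ⟨h, _⟩ <;> rw [h] <;>
    exact ⟨fun h => by nlinarith [h.1, h.2], fun h => ⟨by nlinarith, by nlinarith⟩⟩

theorem Complex.volume_closedBall_neg_inter_closedBall {r c : ℝ} (hc : 0 ≤ c) (hcr : c ≤ r) :
    volume (closedBall (-c : ℂ) r ∩ closedBall (c : ℂ) r) =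
      ENNReal.ofReal (4 * ∫ t in c..r, √(r ^ 2 - t ^ 2)) := by
  have hr : 0 ≤ r := hc.trans hcr
  set L := closedBall (-c : ℂ) r ∩ closedBall (c : ℂ) r
  have hL : MeasurableSet L := measurableSet_closedBall.inter measurableSet_closedBall
  set g : ℝ → ℝ := fun a => 2 * √(r ^ 2 - (|a| + c) ^ 2)
  have hslice : ∀ a, Prod.mk a ⁻¹' (Complex.measurableEquivRealProd.symm ⁻¹' L) =
      {b | b ^ 2 ≤ r ^ 2 - (|a| + c) ^ 2} := fun a => by
    ext b
    rw [mem_preimage, mem_preimage, Complex.mem_closedBall_neg_inter_closedBall_iff hr hc]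
    rfl
  have hg : Integrable g := by
    refine Continuous.integrable_of_hasCompactSupport (by fun_prop)
      (HasCompactSupport.intro (isCompact_closedBall 0 r) fun a ha => ?_)
    rw [mem_closedBall_zero_iff, norm_eq_abs, not_le] at ha
    simp only [g, sqrt_eq_zero'.mpr (by nlinarith [abs_nonneg a] : r ^ 2 - (|a| + c) ^ 2 ≤ 0),
      mul_zero]
  rw [← Complex.volume_preserving_equiv_real_prod.symm.measure_preimage hL.nullMeasurableSet,
    Measure.volume_eq_prod, Measure.prod_apply (hL.preimage (MeasurableEquiv.measurable _))]
  simp only [hslice, volume_setOf_sq_le]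
  rw [← ofReal_integral_eq_lintegral_ofReal hg (.of_forall fun a => by positivity),
    MeasureTheory.integral_const_mul, integral_sqrt_sq_sub_sq_abs_add hr hcr, ← mul_assoc]
  norm_num

theorem Complex.exists_isometryEquiv_measurePreserving (z w : ℂ) :
    ∃ φ : ℂ ≃ᵢ ℂ, MeasurePreserving φ ∧
      φ (-((dist z w / 2 : ℝ) : ℂ)) = z ∧ φ ((dist z w / 2 : ℝ) : ℂ) = w := by
  have hrot : (Circle.exp (arg (w - z)) : ℂ) * ((dist z w / 2 : ℝ) : ℂ) = (w - z) / 2 := by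
    rw [Circle.coe_exp, dist_comm, Complex.dist_eq]
    push_cast
    linear_combination (1 / 2 : ℂ) * norm_mul_exp_arg_mul_I (w - z)
  refine ⟨(rotation (Circle.exp (arg (w - z)))).toIsometryEquiv.trans
      (IsometryEquiv.addRight ((z + w) / 2)),
    (measurePreserving_add_right volume _).comp (LinearIsometryEquiv.measurePreserving _),
    ?_, ?_⟩ <;>
    simp only [IsometryEquiv.trans_apply, LinearIsometryEquiv.coe_toIsometryEquiv,
      IsometryEquiv.addRight_apply, rotation_apply, mul_neg]
  · linear_combination -hrot
  · linear_combination hrot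

theorem Complex.volume_closedBall_inter_closedBall {r : ℝ} (hr : 0 < r) (z w : ℂ) :
    volume (closedBall z r ∩ closedBall w r) =
      ENNReal.ofReal (π * r ^ 2 * euclidHat (dist z w / (2 * r))) := by
  rcases lt_or_ge (r + r) (dist z w) with hfar | hnear
  · have hhat : euclidHat (dist z w / (2 * r)) = 0 := by
      rw [euclidHat, if_neg (by rw [not_le, one_lt_div (by positivity)]; linarith)]
    rw [(closedBall_disjoint_closedBall hfar).inter_eq, hhat, measure_empty, mul_zero,
      ENNReal.ofReal_zero]
  obtain ⟨φ, hφ, hz, hw⟩ := Complex.exists_isometryEquiv_measurePreserving z w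
  have hc : dist z w / 2 ∈ Icc (-r) r := ⟨by linarith [dist_nonneg (x := z) (y := w)], by linarith⟩
  have hL : MeasurableSet (closedBall z r ∩ closedBall w r) :=
    measurableSet_closedBall.inter measurableSet_closedBall
  rw [← hφ.measure_preimage hL.nullMeasurableSet, preimage_inter, φ.preimage_closedBall,
    φ.preimage_closedBall, φ.symm_apply_eq.mpr hz.symm, φ.symm_apply_eq.mpr hw.symm,
    Complex.volume_closedBall_neg_inter_closedBall (by positivity) hc.2,
    integral_sqrt_sq_sub_sq hr hc, div_div, mul_comm 2 r]
  ring_nf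

theorem Complex.measureReal_closedBall_inter_closedBall {r : ℝ} (hr : 0 < r) (z w : ℂ) :
    volume.real (closedBall z r ∩ closedBall w r) =
      π * r ^ 2 * euclidHat (dist z w / (2 * r)) := by
  rw [measureReal_def, Complex.volume_closedBall_inter_closedBall hr,
    ENNReal.toReal_ofReal (mul_nonneg (by positivity) (euclidHat_nonneg _))]

theorem Int.abs_cast_le_sq {R : Type*} [Ring R] [LinearOrder R] [IsStrictOrderedRing R] (k : ℤ) :
    |(k : R)| ≤ (k : R) ^ 2 := by
  have := Int.natCast_natAbs k ▸ Int.natAbs_le_self_sq k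
  exact_mod_cast this

theorem abs_sum_mul_measureReal_le_sum_sum {α ι : Type*} [MeasurableSpace α] [Fintype ι]
    (μ : Measure α) {B : ι → Set α} (hB : ∀ j, MeasurableSet (B j)) (hBfin : ∀ j, μ (B j) ≠ ⊤)
    (σ : ι → ℤ) :
    |∑ j, (σ j : ℝ) * μ.real (B j)| ≤ ∑ i, ∑ j, (σ i * σ j : ℝ) * μ.real (B i ∩ B j) := by
  have hint : ∀ i j (c : ℝ), Integrable ((B i ∩ B j).indicator fun _ => c) μ := fun i j _ =>
    (integrableOn_const (measure_inter_lt_top_of_left_ne_top (hBfin i)).ne).integrable_indicator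
      ((hB i).inter (hB j))
  have hint' : ∀ j (c : ℝ), Integrable ((B j).indicator fun _ => c) μ := fun j c =>
    inter_self (B j) ▸ hint j j c
  set f : α → ℝ := fun u => ∑ j, (B j).indicator (fun _ => (σ j : ℝ)) u
  have hf_int : ∀ u, f u = ((∑ j, (B j).indicator (fun _ => σ j) u : ℤ) : ℝ) := fun u => by
    rw [Int.cast_sum]
    refine Finset.sum_congr rfl fun j _ => ?_
    by_cases hu : u ∈ B j <;> simp [hu]
  have hf_sq : ∀ u, f u ^ 2 = ∑ i, ∑ j, (B i ∩ B j).indicator (fun _ => (σ i * σ j : ℝ)) u :=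
    fun u => by simp only [f, sq, Finset.sum_mul_sum, inter_indicator_mul]
  calc |∑ j, (σ j : ℝ) * μ.real (B j)|
      = |∫ u, f u ∂μ| := by
        rw [integral_finsetSum _ fun j _ => hint' j _]
        simp only [integral_indicator_const _ (hB _), smul_eq_mul, mul_comm]
    _ ≤ ∫ u, |f u| ∂μ := abs_integral_le_integral_abs
    _ ≤ ∫ u, ∑ i, ∑ j, (B i ∩ B j).indicator (fun _ => (σ i * σ j : ℝ)) u ∂μ :=
        integral_mono_of_nonneg (.of_forall fun u => abs_nonneg _)
          (integrable_finsetSum _ fun i _ => integrable_finsetSum _ fun j _ => hint i j _)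
          (.of_forall fun u => by simpa only [← hf_sq, hf_int] using Int.abs_cast_le_sq _)
    _ = ∑ i, ∑ j, (σ i * σ j : ℝ) * μ.real (B i ∩ B j) := by
        rw [integral_finsetSum _ fun i _ => integrable_finsetSum _ fun j _ => hint i j _]
        simp only [integral_finsetSum _ fun j _ => hint _ j _,
          integral_indicator_const _ ((hB _).inter (hB _)), smul_eq_mul, mul_comm]

theorem Finset.sum_sum_eq_sum_add_two_nsmul_sum_lt {ι M : Type*} [Fintype ι] [LinearOrder ι]
    [AddCommMonoid M] (a : ι → ι → M) (ha : ∀ i j, a i j = a j i) :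
    ∑ i, ∑ j, a i j = ∑ i, a i i + 2 • ∑ i, ∑ j with i < j, a i j := by
  have hrow : ∀ i, ∑ j, a i j = ∑ j with j < i, a i j + a i i + ∑ j with i < j, a i j := by
    intro i
    rw [sum_filter, sum_filter, ← Fintype.sum_ite_eq i (a i), ← sum_add_distrib,
      ← sum_add_distrib]
    refine sum_congr rfl fun j _ => ?_
    rcases lt_trichotomy j i with h | rfl | h
    · simp [h, h.ne', h.not_gt]
    · simp
    · simp [h, h.ne, h.not_gt]
  have hlower : ∑ i, ∑ j with j < i, a i j = ∑ i, ∑ j with i < j, a i j := by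
    rw [sum_comm' (t' := univ) (s' := fun j => univ.filter (j < ·)) (by simp)]
    exact sum_congr rfl fun i _ => sum_congr rfl fun j _ => ha j i
  simp only [hrow, sum_add_distrib, hlower, two_nsmul]
  abel

theorem Complex.abs_sum_le_sum_sum_mul_euclidHat {ι : Type*} [Fintype ι] (z : ι → ℂ) {s : ℝ}
    (hs : 0 < s) (τ : ι → ℤ) :
    |∑ j, (τ j : ℝ)| ≤ ∑ i, ∑ j, (τ i * τ j : ℝ) * euclidHat (dist (z i) (z j) / s) := by
  set B : ι → Set ℂ := fun j => closedBall (z j) (s / 2)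
  set V := π * (s / 2) ^ 2
  have hV : 0 < V := by positivity
  have hlens : ∀ i j, volume.real (B i ∩ B j) = V * euclidHat (dist (z i) (z j) / s) :=
    fun i j => by
      rw [Complex.measureReal_closedBall_inter_closedBall (by positivity),
        mul_div_cancel₀ s two_ne_zero]
  have hdisc : ∀ j, volume.real (B j) = V := fun j => by
    rw [← inter_self (B j), hlens, dist_self, zero_div, euclidHat_zero, mul_one]
  refine le_of_mul_le_mul_left ?_ hV
  calc V * |∑ j, (τ j : ℝ)| = |∑ j, (τ j : ℝ) * volume.real (B j)| := by
        simp only [hdisc, ← Finset.sum_mul, abs_mul, abs_of_pos hV, mul_comm]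
    _ ≤ ∑ i, ∑ j, (τ i * τ j : ℝ) * volume.real (B i ∩ B j) :=
        abs_sum_mul_measureReal_le_sum_sum volume (fun _ => measurableSet_closedBall)
          (fun _ => measure_closedBall_lt_top.ne) τ
    _ = V * ∑ i, ∑ j, (τ i * τ j : ℝ) * euclidHat (dist (z i) (z j) / s) := by
        simp only [hlens, Finset.mul_sum]
        exact Finset.sum_congr rfl fun i _ => Finset.sum_congr rfl fun j _ => by ring

theorem euclidHat_energy_lower_bound_general
    (n : ℕ) (s : ℝ) (hs : 0 < s)
    (x : Fin n → EuclideanSpace ℝ (Fin 2))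
    (σ : Fin n → ℝ) (hσ : ∀ j, σ j = 1 ∨ σ j = -1) :
    ∑ i : Fin n, ∑ j ∈ Finset.univ.filter (fun j => i < j),
        σ i * σ j * euclidHat (‖x i - x j‖ / s)
      ≥ -(1 / 2) * ((n : ℝ) - |∑ j : Fin n, σ j|) := by
  obtain ⟨τ, rfl⟩ : ∃ τ : Fin n → ℤ, σ = fun j => (τ j : ℝ) :=
    ⟨fun j => if σ j = 1 then 1 else -1, funext fun j => by rcases hσ j with h | h <;> simp [h]⟩
  have hsq : ∀ i, (τ i : ℝ) * τ i = 1 := fun i => by rcases hσ i with h | h <;> simp [h]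
  have key := Complex.abs_sum_le_sum_sum_mul_euclidHat
    (fun j => Complex.orthonormalBasisOneI.repr.symm (x j)) hs τ
  simp only [dist_eq_norm, ← map_sub, LinearIsometryEquiv.norm_map] at key
  rw [Finset.sum_sum_eq_sum_add_two_nsmul_sum_lt _
    (fun i j => by simp only [norm_sub_rev (x i)]; ring)] at key
  simp only [sub_self, norm_zero, zero_div, euclidHat_zero, mul_one, hsq, Finset.sum_const,
    Finset.card_univ, Fintype.card_fin, nsmul_eq_mul] at key
  linarith

theorem euclidHat_energy_lower_bound
    (n : ℕ) (hn : 2 ≤ n) (s : ℝ) (hs : 0 < s)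
    (x : Fin n → EuclideanSpace ℝ (Fin 2))
    (σ : Fin n → ℝ) (hσ : ∀ j, σ j = 1 ∨ σ j = -1) :
    ∑ i : Fin n, ∑ j ∈ Finset.univ.filter (fun j => i < j),
        σ i * σ j * euclidHat (‖x i - x j‖ / s)
      ≥ -(1 / 2) * ((n : ℝ) - |∑ j : Fin n, σ j|) :=
  euclidHat_energy_lower_bound_general n s hs x σ hσ
end

section
/- For every x > 0, the function K₀ is differentiable with K₀′(x) = −K₁(x), and the function x ↦ x·K₁(x) is differentiable with derivative (x·K₁(x))′ = −x·K₀(x). -/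
open Real MeasureTheory

/-- Modified Bessel function of the second kind of order 0, via the integral
representation `K₀(x) = ∫₀^∞ e^{−x√(k²+1)} / √(k²+1) dk`. -/
noncomputable def K0 (x : ℝ) : ℝ :=
  ∫ k in Set.Ioi (0 : ℝ), Real.exp (-x * Real.sqrt (k ^ 2 + 1)) / Real.sqrt (k ^ 2 + 1)

/-- Modified Bessel function of the second kind of order 1, via the integral
representation `K₁(x) = ∫₀^∞ e^{−x√(k²+1)} dk`. -/
noncomputable def K1 (x : ℝ) : ℝ :=
  ∫ k in Set.Ioi (0 : ℝ), Real.exp (-x * Real.sqrt (k ^ 2 + 1))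

/-!
Differentiating under the integral sign is legitimate for `y > x / 2`, where every integrand
`g(k) √(k²+1) e^{-y√(k²+1)}` with bounded `g` is dominated by a multiple of
`√(k²+1) e^{-x√(k²+1)/2}`. This gives `K₀' = -K₁` and
`K₁'(x) = -∫₀^∞ √(k²+1) e^{-x√(k²+1)} dk`. Integrating over `(0, ∞)` the derivative of
`k e^{-x√(k²+1)}`, a function vanishing at `0` and at `∞`, and using `k² = (k²+1) - 1` gives
`K₁(x) + x K₀(x) = x ∫₀^∞ √(k²+1) e^{-x√(k²+1)} dk`, i.e. `(x K₁(x))' = -x K₀(x)`.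
-/

open Set Filter Topology

lemma le_sqrt_sq_add_one (k : ℝ) : k ≤ √(k ^ 2 + 1) :=
  le_sqrt_of_sq_le (by linarith)

lemma one_le_sqrt_sq_add_one (k : ℝ) : 1 ≤ √(k ^ 2 + 1) :=
  one_le_sqrt.2 (by nlinarith)

lemma sqrt_sq_add_one_le {k : ℝ} (hk : 0 ≤ k) : √(k ^ 2 + 1) ≤ k + 1 :=
  sqrt_le_iff.2 ⟨by linarith, by nlinarith⟩

lemma continuous_inv_sqrt_sq_add_one : Continuous fun k : ℝ => (√(k ^ 2 + 1))⁻¹ := by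
  fun_prop (disch := intro; positivity)

lemma norm_inv_sqrt_sq_add_one_le_one (k : ℝ) : ‖(√(k ^ 2 + 1))⁻¹‖ ≤ 1 := by
  rw [norm_inv, norm_of_nonneg (sqrt_nonneg _)]
  exact inv_le_one_of_one_le₀ (one_le_sqrt_sq_add_one k)

lemma exp_neg_mul_sqrt_sq_add_one_le {c : ℝ} (hc : 0 ≤ c) (k : ℝ) :
    exp (-c * √(k ^ 2 + 1)) ≤ exp (-c * k) :=
  exp_le_exp.2 (by nlinarith [le_sqrt_sq_add_one k])

lemma integrableOn_sqrt_mul_exp_neg_mul_sqrt {c : ℝ} (hc : 0 < c) :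
    IntegrableOn (fun k => √(k ^ 2 + 1) * exp (-c * √(k ^ 2 + 1))) (Ioi 0) := by
  have hlin : IntegrableOn (fun k : ℝ => k * exp (-c * k)) (Ioi 0) := by
    simpa using integrableOn_rpow_mul_exp_neg_mul_rpow (s := 1) (p := 1) (by norm_num) one_pos hc
  refine (hlin.add (exp_neg_integrableOn_Ioi 0 hc)).mono' (by fun_prop) ?_
  filter_upwards [self_mem_ae_restrict measurableSet_Ioi] with k (hk : 0 < k)
  rw [norm_of_nonneg (by positivity), Pi.add_apply, ← add_one_mul]
  exact mul_le_mul (sqrt_sq_add_one_le hk.le) (exp_neg_mul_sqrt_sq_add_one_le hc.le k)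
    (exp_pos _).le (by linarith)

lemma integrableOn_mul_exp_neg_mul_sqrt {g : ℝ → ℝ} {C c : ℝ}
    (hg : AEStronglyMeasurable g (volume.restrict (Ioi 0)))
    (hgC : ∀ k, ‖g k‖ ≤ C * √(k ^ 2 + 1)) (hc : 0 < c) :
    IntegrableOn (fun k => g k * exp (-c * √(k ^ 2 + 1))) (Ioi 0) := by
  refine ((integrableOn_sqrt_mul_exp_neg_mul_sqrt hc).const_mul C).mono'
    (hg.mul (by fun_prop)) (ae_of_all _ fun k => ?_)
  rw [norm_mul, norm_of_nonneg (exp_pos _).le, ← mul_assoc]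
  exact mul_le_mul_of_nonneg_right (hgC k) (exp_pos _).le

noncomputable def sqrtLaplace (g : ℝ → ℝ) (y : ℝ) : ℝ :=
  ∫ k in Ioi 0, g k * exp (-y * √(k ^ 2 + 1))

lemma K0_eq_sqrtLaplace : K0 = sqrtLaplace fun k => (√(k ^ 2 + 1))⁻¹ := by
  ext y
  simp only [K0, sqrtLaplace, div_eq_inv_mul]

lemma K1_eq_sqrtLaplace : K1 = sqrtLaplace 1 := by
  ext y
  simp only [K1, sqrtLaplace, Pi.one_apply, one_mul]

lemma hasDerivAt_sqrtLaplace {g : ℝ → ℝ} {C x : ℝ}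
    (hg : AEStronglyMeasurable g (volume.restrict (Ioi 0))) (hgC : ∀ k, ‖g k‖ ≤ C)
    (hx : 0 < x) :
    HasDerivAt (sqrtLaplace g) (-sqrtLaplace (fun k => g k * √(k ^ 2 + 1)) x) x := by
  have hC : 0 ≤ C := (norm_nonneg _).trans (hgC 0)
  have hF' := hasDerivAt_integral_of_dominated_loc_of_deriv_le (μ := volume.restrict (Ioi 0))
    (F := fun y k => g k * exp (-y * √(k ^ 2 + 1)))
    (F' := fun y k => -(g k * √(k ^ 2 + 1) * exp (-y * √(k ^ 2 + 1))))
    (bound := fun k => C * (√(k ^ 2 + 1) * exp (-(x / 2) * √(k ^ 2 + 1))))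
    (Ioi_mem_nhds (half_lt_self hx))
    (.of_forall fun y => hg.mul (by fun_prop))
    (integrableOn_mul_exp_neg_mul_sqrt hg
      (fun k => (hgC k).trans (le_mul_of_one_le_right hC (one_le_sqrt_sq_add_one k))) hx)
    ((hg.mul (by fun_prop)).mul (by fun_prop)).neg
    (ae_of_all _ fun k y (hy : x / 2 < y) => ?_)
    (((integrableOn_sqrt_mul_exp_neg_mul_sqrt (half_pos hx))).const_mul C)
    (ae_of_all _ fun k y _ => ?_)
  · rw [sqrtLaplace, ← integral_neg]
    exact hF'.2
  · have hs := one_le_sqrt_sq_add_one k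
    rw [norm_neg, norm_mul, norm_mul, norm_of_nonneg (r := √(k ^ 2 + 1)) (by linarith),
      norm_of_nonneg (exp_pos _).le, mul_assoc]
    exact mul_le_mul (hgC k)
      (mul_le_mul_of_nonneg_left (exp_le_exp.2 (by nlinarith)) (by linarith)) (by positivity) hC
  · have := (((hasDerivAt_neg' y).mul_const √(k ^ 2 + 1)).exp).const_mul (g k)
    exact this.congr_deriv (by ring)

lemma tendsto_mul_exp_neg_mul_sqrt_atTop {c : ℝ} (hc : 0 < c) :
    Tendsto (fun k => k * exp (-c * √(k ^ 2 + 1))) atTop (𝓝 0) := by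
  have hlin : Tendsto (fun k => k * exp (-c * k)) atTop (𝓝 0) := by
    simpa using tendsto_rpow_mul_exp_neg_mul_atTop_nhds_zero 1 c hc
  refine tendsto_of_tendsto_of_tendsto_of_le_of_le' tendsto_const_nhds hlin ?_ ?_ <;>
    filter_upwards [eventually_ge_atTop 0] with k hk
  · positivity
  · exact mul_le_mul_of_nonneg_left (exp_neg_mul_sqrt_sq_add_one_le hc.le k) hk

lemma hasDerivAt_mul_exp_neg_mul_sqrt (c k : ℝ) :
    HasDerivAt (fun k => k * exp (-c * √(k ^ 2 + 1)))
      (exp (-c * √(k ^ 2 + 1)) + c * ((√(k ^ 2 + 1))⁻¹ * exp (-c * √(k ^ 2 + 1)))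
        - c * (√(k ^ 2 + 1) * exp (-c * √(k ^ 2 + 1)))) k := by
  have hs : √(k ^ 2 + 1) ≠ 0 := by linarith [one_le_sqrt_sq_add_one k]
  have hsq : √(k ^ 2 + 1) ^ 2 = k ^ 2 + 1 := sq_sqrt (by positivity)
  have hsqrt : HasDerivAt (fun k => √(k ^ 2 + 1)) (2 * k / (2 * √(k ^ 2 + 1))) k := by
    simpa using ((hasDerivAt_pow 2 k).add_const 1).sqrt (by positivity)
  refine ((hasDerivAt_id k).mul (hsqrt.const_mul (-c)).exp).congr_deriv ?_
  simp only [id]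
  field_simp
  linear_combination c * hsq

lemma sqrtLaplace_one_add_mul_sqrtLaplace_inv_sqrt {x : ℝ} (hx : 0 < x) :
    sqrtLaplace 1 x + x * sqrtLaplace (fun k => (√(k ^ 2 + 1))⁻¹) x =
      x * sqrtLaplace (fun k => √(k ^ 2 + 1)) x := by
  have hint {g : ℝ → ℝ} (hg : Continuous g) (hgs : ∀ k, ‖g k‖ ≤ √(k ^ 2 + 1)) :
      IntegrableOn (fun k => g k * exp (-x * √(k ^ 2 + 1))) (Ioi 0) :=
    integrableOn_mul_exp_neg_mul_sqrt (C := 1) hg.aestronglyMeasurable (by simpa using hgs) hx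
  have hs := one_le_sqrt_sq_add_one
  have hone : IntegrableOn (fun k => exp (-x * √(k ^ 2 + 1))) (Ioi 0) := by
    simpa using hint (g := 1) continuous_const fun k => by simpa using hs k
  have hinv := hint continuous_inv_sqrt_sq_add_one fun k =>
    (norm_inv_sqrt_sq_add_one_le_one k).trans (hs k)
  have hsqrt := hint (g := fun k => √(k ^ 2 + 1)) (by fun_prop) fun k =>
    (norm_of_nonneg (sqrt_nonneg _)).le
  have hsum : IntegrableOn (fun k => exp (-x * √(k ^ 2 + 1))
      + x * ((√(k ^ 2 + 1))⁻¹ * exp (-x * √(k ^ 2 + 1)))) (Ioi 0) := hone.add (hinv.const_mul x)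
  have hibp := integral_Ioi_of_hasDerivAt_of_tendsto'
    (fun k _ => hasDerivAt_mul_exp_neg_mul_sqrt x k) (hsum.sub (hsqrt.const_mul x))
    (tendsto_mul_exp_neg_mul_sqrt_atTop hx)
  rw [integral_sub hsum (hsqrt.const_mul x), integral_add hone (hinv.const_mul x),
    integral_const_mul, integral_const_mul] at hibp
  simp only [sqrtLaplace, Pi.one_apply, one_mul]
  linarith

theorem besselK_derivatives (x : ℝ) (hx : 0 < x) :
    HasDerivAt K0 (-(K1 x)) x ∧ HasDerivAt (fun y => y * K1 y) (-(x * K0 x)) x := by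
  have hK0' : HasDerivAt K0 (-(K1 x)) x := by
    have := hasDerivAt_sqrtLaplace continuous_inv_sqrt_sq_add_one.aestronglyMeasurable
      norm_inv_sqrt_sq_add_one_le_one hx
    rw [K0_eq_sqrtLaplace, K1_eq_sqrtLaplace]
    convert this using 3
    ext k
    simp [inv_mul_cancel₀ (sqrt_pos.2 (by positivity : 0 < k ^ 2 + 1)).ne']
  have hK1' : HasDerivAt K1 (-sqrtLaplace (fun k => √(k ^ 2 + 1)) x) x := by
    simpa [K1_eq_sqrtLaplace] using
      hasDerivAt_sqrtLaplace (g := 1) (C := 1) aestronglyMeasurable_const (by simp) hx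
  refine ⟨hK0', ((hasDerivAt_id x).mul hK1').congr_deriv ?_⟩
  have := sqrtLaplace_one_add_mul_sqrtLaplace_inv_sqrt hx
  rw [K0_eq_sqrtLaplace, K1_eq_sqrtLaplace]
  simp only [id, one_mul]
  linarith
end

section
/- For every w with 0 < w < 1/2 one has w·K₁(w) < K₀(w), and for every w > (1 + √17)/8 one has w·K₁(w) > K₀(w). Consequently the second derivative of h̃(w) = w·K₁(w), which equals w·K₁(w) − K₀(w), is negative on (0, 1/2) and positive on ((1 + √17)/8, ∞). -/
open Real MeasureTheory

/-!
Write `S k = √(k² + 1)`. Differentiating under the integral sign, `(w K₁)'' = w M₂ - 2 M₁` with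
`Mₙ(w) = ∫₀^∞ Sⁿ e^{-wS} dk`, and integrating `k S e^{-wS}` by parts turns this into `w K₁ - K₀`.
Integrating `k e^{-wS} / (S + 1)` by parts gives `∫₀^∞ e^{-wS} / (S (S + 1)) dk = w (K₁ - K₀)`.
Since `S ≥ 1`, the weight `1 / (S (S + 1))` lies between `3 / (4 S) - 1 / 4` and `1 / (2 S)`, so
`(3 K₀ - K₁) / 4 ≤ w (K₁ - K₀) ≤ K₀ / 2`. As `K₀ > 0`, the upper bound gives `w K₁ < K₀` for
`w < 1 / 2`, and the lower one gives `w K₁ > K₀` as soon as `4 w² - w - 1 > 0`.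
-/

open Set Filter Topology
open scoped Nat

lemma inv_mul_add_one_le_half_inv {t : ℝ} (ht : 1 ≤ t) : (t * (t + 1))⁻¹ ≤ 2⁻¹ * t⁻¹ := by
  rw [← mul_inv]
  exact inv_anti₀ (by positivity) (by nlinarith)

lemma three_quarters_inv_sub_quarter_le_inv_mul_add_one {t : ℝ} (ht : 0 < t) :
    3 / 4 * t⁻¹ - 1 / 4 ≤ (t * (t + 1))⁻¹ := by
  have key : 3 / 4 * t⁻¹ - 1 / 4 = (3 - t) * (t + 1) / 4 * (t * (t + 1))⁻¹ := by
    field_simp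
  rw [key]
  exact mul_le_of_le_one_left (by positivity) (by nlinarith [sq_nonneg (t - 1)])

lemma pow_mul_exp_neg_mul_le {c t : ℝ} (hc : 0 < c) (ht : 0 ≤ t) (n : ℕ) :
    t ^ n * exp (-c * t) ≤ n ! / c ^ n := by
  have h := pow_div_factorial_le_exp (c * t) (mul_nonneg hc.le ht) n
  rw [div_le_iff₀ (by positivity), mul_pow] at h
  rw [le_div_iff₀ (by positivity), neg_mul, exp_neg]
  calc t ^ n * (exp (c * t))⁻¹ * c ^ n = c ^ n * t ^ n * (exp (c * t))⁻¹ := by ring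
    _ ≤ exp (c * t) * n ! * (exp (c * t))⁻¹ := by gcongr
    _ = n ! := by field_simp

namespace BesselK

noncomputable def S (k : ℝ) : ℝ := √(k ^ 2 + 1)

lemma sq_S (k : ℝ) : S k ^ 2 = k ^ 2 + 1 := sq_sqrt (by positivity)

lemma one_le_S (k : ℝ) : 1 ≤ S k := one_le_sqrt.2 (by nlinarith [sq_nonneg k])

lemma S_pos (k : ℝ) : 0 < S k := one_pos.trans_le (one_le_S k)

lemma abs_le_S (k : ℝ) : |k| ≤ S k := by
  rw [← sqrt_sq_eq_abs]
  exact sqrt_le_sqrt (by linarith)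

@[fun_prop]
lemma continuous_S : Continuous S := by unfold S; fun_prop

lemma hasDerivAt_S (k : ℝ) : HasDerivAt S (k / S k) k := by
  refine (((hasDerivAt_pow 2 k).add_const 1).sqrt (by positivity)).congr_deriv ?_
  norm_num [S]
  field_simp

lemma hasDerivAt_exp_neg_mul_S (x k : ℝ) :
    HasDerivAt (fun k => exp (-x * S k)) (-x * (k / S k) * exp (-x * S k)) k := by
  simpa [mul_comm] using ((hasDerivAt_S k).const_mul (-x)).exp

variable {g : ℝ → ℝ} {n : ℕ} {x : ℝ}

lemma abs_mul_exp_neg_mul_S_le (hg : ∀ k, |g k| ≤ S k ^ n) (hx : 0 < x) (k : ℝ) :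
    |g k * exp (-x * S k)| ≤ n ! / (x / 2) ^ n * exp (-(x / 2) * k) := by
  have hkS := (le_abs_self k).trans (abs_le_S k)
  rw [abs_mul, abs_exp]
  calc |g k| * exp (-x * S k) ≤ S k ^ n * exp (-(x / 2) * S k) * exp (-(x / 2) * S k) := by
        rw [mul_assoc, ← exp_add]; ring_nf; gcongr; exact hg k
    _ ≤ n ! / (x / 2) ^ n * exp (-(x / 2) * k) :=
        mul_le_mul (pow_mul_exp_neg_mul_le (half_pos hx) (S_pos k).le n)
          (exp_le_exp.2 (by nlinarith)) (exp_nonneg _) (by positivity)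

/-- Stated for `volume.restrict (Ioi 0)` rather than as `IntegrableOn`, so that `fun_prop` can
combine these facts. -/
lemma integrable_mul_exp_neg_mul_S (hg_cont : Continuous g) (hg : ∀ k, |g k| ≤ S k ^ n)
    (hx : 0 < x) : Integrable (fun k => g k * exp (-x * S k)) (volume.restrict (Ioi 0)) := by
  refine ((exp_neg_integrableOn_Ioi 0 (half_pos hx)).const_mul (n ! / (x / 2) ^ n)).mono'
    (Continuous.aestronglyMeasurable (by fun_prop)) (ae_of_all _ fun k => ?_)
  simpa [neg_mul] using abs_mul_exp_neg_mul_S_le hg hx k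

lemma tendsto_mul_exp_neg_mul_S (hg : ∀ k, |g k| ≤ S k ^ n) (hx : 0 < x) :
    Tendsto (fun k => g k * exp (-x * S k)) atTop (𝓝 0) := by
  have hdecay : Tendsto (fun k => n ! / (x / 2) ^ n * exp (-(x / 2) * k)) atTop (𝓝 0) := by
    simpa using (tendsto_exp_atBot.comp
      (tendsto_id.const_mul_atTop_of_neg (neg_lt_zero.2 (half_pos hx)))).const_mul _
  exact squeeze_zero_norm (abs_mul_exp_neg_mul_S_le hg hx) hdecay

lemma integral_eq_zero_of_hasDerivAt_mul_exp_neg_mul_S {f : ℝ → ℝ}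
    (hg : ∀ k, |g k| ≤ S k ^ n) (hg0 : g 0 = 0) (hx : 0 < x)
    (hderiv : ∀ k, HasDerivAt (fun k => g k * exp (-x * S k)) (f k) k)
    (hf : Integrable f (volume.restrict (Ioi 0))) : ∫ k in Ioi 0, f k = 0 := by
  rw [integral_Ioi_of_hasDerivAt_of_tendsto' (fun k _ => hderiv k) hf
    (tendsto_mul_exp_neg_mul_S hg hx), hg0, zero_mul, sub_zero]

noncomputable def moment (n : ℕ) (x : ℝ) : ℝ := ∫ k in Ioi 0, S k ^ n * exp (-x * S k)

lemma integrable_S_pow_mul_exp (n : ℕ) (hx : 0 < x) :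
    Integrable (fun k => S k ^ n * exp (-x * S k)) (volume.restrict (Ioi 0)) :=
  integrable_mul_exp_neg_mul_S (continuous_S.pow n)
    (fun k => (abs_of_pos (pow_pos (S_pos k) n)).le) hx

lemma integrable_inv_S_mul_exp (hx : 0 < x) :
    Integrable (fun k => (S k)⁻¹ * exp (-x * S k)) (volume.restrict (Ioi 0)) := by
  refine integrable_mul_exp_neg_mul_S (n := 0) (continuous_S.inv₀ fun k => (S_pos k).ne')
    (fun k => ?_) hx
  rw [pow_zero, abs_inv, abs_of_pos (S_pos k)]
  exact inv_le_one_of_one_le₀ (one_le_S k)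

lemma integrable_inv_S_mul_S_add_one_mul_exp (hx : 0 < x) :
    Integrable (fun k => (S k * (S k + 1))⁻¹ * exp (-x * S k)) (volume.restrict (Ioi 0)) := by
  refine integrable_mul_exp_neg_mul_S (n := 0)
    (by fun_prop (disch := exact fun k => (by have := S_pos k; positivity))) (fun k => ?_) hx
  have := one_le_S k
  rw [pow_zero, abs_inv, abs_of_pos (by positivity)]
  exact inv_le_one_of_one_le₀ (by nlinarith)

lemma hasDerivAt_moment (n : ℕ) (hx : 0 < x) :
    HasDerivAt (moment n) (-moment (n + 1) x) x := by
  have key := hasDerivAt_integral_of_dominated_loc_of_deriv_le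
    (μ := volume.restrict (Ioi 0)) (x₀ := x)
    (F := fun y k => S k ^ n * exp (-y * S k))
    (F' := fun y k => -(S k ^ (n + 1) * exp (-y * S k)))
    (bound := fun k => S k ^ (n + 1) * exp (-(x / 2) * S k))
    (Ioi_mem_nhds (half_lt_self hx))
    (Eventually.of_forall fun y => Continuous.aestronglyMeasurable (by fun_prop))
    (integrable_S_pow_mul_exp n hx) (Continuous.aestronglyMeasurable (by fun_prop))
    (ae_of_all _ fun k y hy => ?_) (integrable_S_pow_mul_exp (n + 1) (half_pos hx))
    (ae_of_all _ fun k y _ => ?_)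
  · have := key.2
    rw [integral_neg] at this
    exact this
  · have := S_pos k
    rw [norm_neg, Real.norm_of_nonneg (by positivity)]
    gcongr
    exact le_of_lt hy
  · exact ((((hasDerivAt_neg y).mul_const (S k)).exp).const_mul (S k ^ n)).congr_deriv (by ring)

lemma moment_zero : moment 0 = K1 := by
  ext x
  simp [moment, K1, S]

lemma K0_eq (x : ℝ) : K0 x = ∫ k in Ioi 0, (S k)⁻¹ * exp (-x * S k) := by
  simp only [K0, S, div_eq_inv_mul]

lemma K0_pos (hx : 0 < x) : 0 < K0 x := by
  rw [K0_eq, setIntegral_pos_iff_support_of_nonneg_ae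
    (ae_of_all _ fun k => by have := S_pos k; positivity) (integrable_inv_S_mul_exp hx)]
  have hsupp : Function.support (fun k => (S k)⁻¹ * exp (-x * S k)) = univ :=
    Function.support_eq_univ fun k => by have := S_pos k; positivity
  rw [hsupp, univ_inter, Real.volume_Ioi]
  exact ENNReal.zero_lt_top

lemma hasDerivAt_K1 (hx : 0 < x) : HasDerivAt K1 (-moment 1 x) x :=
  moment_zero ▸ hasDerivAt_moment 0 hx

lemma mul_moment_two_sub_two_mul_moment_one (hx : 0 < x) :
    x * moment 2 x - 2 * moment 1 x = x * K1 x - K0 x := by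
  -- the powers `S k ^ 0` and `S k ^ 1` make the pieces of the integral literally `moment n x`
  have hderiv (k : ℝ) : HasDerivAt (fun k => k * S k * exp (-x * S k))
      (2 * (S k ^ 1 * exp (-x * S k)) - (S k)⁻¹ * exp (-x * S k)
        - x * (S k ^ 2 * exp (-x * S k)) + x * (S k ^ 0 * exp (-x * S k))) k := by
    refine (((hasDerivAt_id' k).mul (hasDerivAt_S k)).mul
      (hasDerivAt_exp_neg_mul_S x k)).congr_deriv ?_
    have := S_pos k
    simp only [Pi.mul_apply]
    field_simp
    linear_combination (S k * x - 1) * sq_S k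
  have hbound (k : ℝ) : |k * S k| ≤ S k ^ 2 := by
    rw [abs_mul, abs_of_pos (S_pos k), sq]
    exact mul_le_mul_of_nonneg_right (abs_le_S k) (S_pos k).le
  have hM0 := integrable_S_pow_mul_exp 0 hx
  have hM1 := integrable_S_pow_mul_exp 1 hx
  have hM2 := integrable_S_pow_mul_exp 2 hx
  have hK0 := integrable_inv_S_mul_exp hx
  have hzero := integral_eq_zero_of_hasDerivAt_mul_exp_neg_mul_S hbound (by simp) hx hderiv
    (by fun_prop)
  rw [integral_add, integral_sub, integral_sub, integral_const_mul, integral_const_mul,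
    integral_const_mul, ← K0_eq] at hzero
  · rw [← moment_zero]
    simp only [moment]
    linarith
  all_goals fun_prop

lemma deriv_deriv_mul_K1 (hx : 0 < x) :
    deriv (deriv fun w => w * K1 w) x = x * K1 x - K0 x := by
  have hderiv : deriv (fun w => w * K1 w) =ᶠ[𝓝 x] fun y => K1 y - y * moment 1 y := by
    filter_upwards [Ioi_mem_nhds hx] with y hy
    have h : HasDerivAt (fun w => w * K1 w) (1 * K1 y + y * -moment 1 y) y :=
      (hasDerivAt_id' y).mul (hasDerivAt_K1 hy)
    rw [h.deriv]
    ring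
  have h : HasDerivAt (fun y => K1 y - y * moment 1 y)
      (-moment 1 x - (1 * moment 1 x + x * -moment 2 x)) x :=
    (hasDerivAt_K1 hx).sub ((hasDerivAt_id' x).mul (hasDerivAt_moment 1 hx))
  rw [hderiv.deriv_eq, h.deriv, ← mul_moment_two_sub_two_mul_moment_one hx]
  ring

lemma integral_inv_S_mul_S_add_one_mul_exp (hx : 0 < x) :
    ∫ k in Ioi 0, (S k * (S k + 1))⁻¹ * exp (-x * S k) = x * (K1 x - K0 x) := by
  have hderiv (k : ℝ) : HasDerivAt (fun k => k / (S k + 1) * exp (-x * S k))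
      ((S k * (S k + 1))⁻¹ * exp (-x * S k) - x * (S k ^ 0 * exp (-x * S k))
        + x * ((S k)⁻¹ * exp (-x * S k))) k := by
    have := S_pos k
    refine (((hasDerivAt_id' k).div ((hasDerivAt_S k).add_const 1) (by positivity)).mul
      (hasDerivAt_exp_neg_mul_S x k)).congr_deriv ?_
    simp only [Pi.div_apply]
    field_simp
    linear_combination (1 + (S k + 1) * x) * sq_S k
  have hbound (k : ℝ) : |k / (S k + 1)| ≤ S k ^ 0 := by
    have := S_pos k
    rw [pow_zero, abs_div, abs_of_pos (by positivity : 0 < S k + 1), div_le_one (by positivity)]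
    linarith [abs_le_S k]
  have hQ := integrable_inv_S_mul_S_add_one_mul_exp hx
  have hM0 := integrable_S_pow_mul_exp 0 hx
  have hK0 := integrable_inv_S_mul_exp hx
  have hzero := integral_eq_zero_of_hasDerivAt_mul_exp_neg_mul_S hbound (by simp) hx hderiv
    (by fun_prop)
  rw [integral_add, integral_sub, integral_const_mul, integral_const_mul, ← K0_eq] at hzero
  · rw [← moment_zero]
    simp only [moment]
    linarith
  all_goals fun_prop

lemma mul_K1_sub_K0_le (hx : 0 < x) : x * (K1 x - K0 x) ≤ 2⁻¹ * K0 x := by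
  rw [← integral_inv_S_mul_S_add_one_mul_exp hx, K0_eq, ← integral_const_mul]
  refine integral_mono (integrable_inv_S_mul_S_add_one_mul_exp hx)
    ((integrable_inv_S_mul_exp hx).const_mul _) fun k => ?_
  rw [← mul_assoc]
  exact mul_le_mul_of_nonneg_right (inv_mul_add_one_le_half_inv (one_le_S k)) (exp_nonneg _)

lemma le_mul_K1_sub_K0 (hx : 0 < x) : 3 / 4 * K0 x - 1 / 4 * K1 x ≤ x * (K1 x - K0 x) := by
  have hM0 := integrable_S_pow_mul_exp 0 hx
  have hK0 := integrable_inv_S_mul_exp hx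
  rw [← integral_inv_S_mul_S_add_one_mul_exp hx, K0_eq, ← moment_zero, moment,
    ← integral_const_mul, ← integral_const_mul, ← integral_sub (by fun_prop) (by fun_prop)]
  refine integral_mono (by fun_prop) (integrable_inv_S_mul_S_add_one_mul_exp hx) fun k => ?_
  calc 3 / 4 * ((S k)⁻¹ * exp (-x * S k)) - 1 / 4 * (S k ^ 0 * exp (-x * S k))
      = (3 / 4 * (S k)⁻¹ - 1 / 4) * exp (-x * S k) := by ring
    _ ≤ (S k * (S k + 1))⁻¹ * exp (-x * S k) := mul_le_mul_of_nonneg_right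
        (three_quarters_inv_sub_quarter_le_inv_mul_add_one (S_pos k)) (exp_nonneg _)

lemma mul_K1_lt_K0 (hx : 0 < x) (hx' : x < 1 / 2) : x * K1 x < K0 x := by
  nlinarith [mul_K1_sub_K0_le hx, K0_pos hx]

lemma K0_lt_mul_K1 (hx : (1 + √17) / 8 < x) : K0 x < x * K1 x := by
  have hx0 : 0 < x := lt_trans (by positivity) hx
  have hquad : x + 1 < 4 * x ^ 2 := by
    have h17 : √17 ^ 2 = 17 := sq_sqrt (by norm_num)
    nlinarith [sqrt_nonneg 17]
  nlinarith [le_mul_K1_sub_K0 hx0, K0_pos hx0]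

end BesselK

open BesselK

theorem htilde_second_derivative_sign :
    (∀ w : ℝ, 0 < w → w < 1 / 2 → w * K1 w < K0 w) ∧
    (∀ w : ℝ, (1 + Real.sqrt 17) / 8 < w → K0 w < w * K1 w) ∧
    (∀ w : ℝ, 0 < w → deriv (deriv (fun w => w * K1 w)) w = w * K1 w - K0 w) ∧
    (∀ w : ℝ, 0 < w → w < 1 / 2 → deriv (deriv (fun w => w * K1 w)) w < 0) ∧
    (∀ w : ℝ, (1 + Real.sqrt 17) / 8 < w → 0 < deriv (deriv (fun w => w * K1 w)) w) := by
  refine ⟨fun w => mul_K1_lt_K0, fun w => K0_lt_mul_K1, fun w => deriv_deriv_mul_K1,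
    fun w hw hw' => ?_, fun w hw => ?_⟩
  · rw [deriv_deriv_mul_K1 hw]
    linarith [mul_K1_lt_K0 hw hw']
  · rw [deriv_deriv_mul_K1 (lt_trans (by positivity) hw)]
    linarith [K0_lt_mul_K1 hw]
end

section
/- For every s ≥ 0, the integral I(s) = ∫_s^∞ K₁(y)·√(y² − s²) dy equals (π/2)·e^{−s}; moreover, for every s > 0 one also has I(s) = s · ∫_s^∞ K₁(y) / √(y² − s²) dy. -/
/-!
Substituting `k = v / y` gives `y K₁(y) = ∫₀^∞ e^{-√(y² + v²)} dv`, and substituting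
`y = √(s² + w²)` turns `∫ₛ^∞ K₁(y) g(y) dy` into an integral over the quadrant `w, v > 0` of
`e^{-√(s² + w² + v²)}` against a weight depending on `w` only. In polar coordinates
`(w, v) = (r cos θ, r sin θ)` the exponential depends on `r` alone, and the angular integrals reduce
to `∫₀^{π/2} dθ / (a + b cos² θ) = π / (2 √a √(a + b))` (substitute `θ = arctan x`). Undoing the
substitution in `r` leaves `∫ₛ^∞ (y - s) e^{-y} dy` and `∫ₛ^∞ e^{-y} dy`.
-/

open Real MeasureTheory

open Set Filter Topology
open scoped ENNReal

section Substitution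

variable {s : ℝ}

theorem hasDerivAt_sqrt_sq_add_sq {w : ℝ} (hw : w ≠ 0) :
    HasDerivAt (fun w => √(s ^ 2 + w ^ 2)) (w / √(s ^ 2 + w ^ 2)) w := by
  have hpos : 0 < s ^ 2 + w ^ 2 := by positivity
  convert ((hasDerivAt_pow 2 w).const_add (s ^ 2)).sqrt hpos.ne' using 1
  field_simp
  ring

theorem strictMonoOn_sqrt_sq_add_sq : StrictMonoOn (fun w => √(s ^ 2 + w ^ 2)) (Ici 0) :=
  fun _ ha _ _ hab => Real.sqrt_lt_sqrt (by positivity) (by gcongr)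

theorem image_sqrt_sq_add_sq_Ioi (hs : 0 ≤ s) :
    (fun w => √(s ^ 2 + w ^ 2)) '' Ioi 0 = Ioi s := by
  ext y
  constructor
  · rintro ⟨w, hw, rfl⟩
    exact (Real.lt_sqrt hs).2 (by nlinarith [mem_Ioi.1 hw])
  · intro hy
    have hsy : 0 < y ^ 2 - s ^ 2 := by nlinarith [mem_Ioi.1 hy]
    refine ⟨√(y ^ 2 - s ^ 2), Real.sqrt_pos.2 hsy, ?_⟩
    dsimp only
    rw [Real.sq_sqrt hsy.le, add_sub_cancel, Real.sqrt_sq (hs.trans (le_of_lt hy))]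

theorem lintegral_Ioi_eq_lintegral_sqrt_sq_add_sq (hs : 0 ≤ s) (f : ℝ → ℝ≥0∞) :
    ∫⁻ y in Ioi s, f y
      = ∫⁻ w in Ioi 0, ENNReal.ofReal (w / √(s ^ 2 + w ^ 2)) * f √(s ^ 2 + w ^ 2) := by
  rw [← image_sqrt_sq_add_sq_Ioi hs, lintegral_image_eq_lintegral_abs_deriv_mul measurableSet_Ioi
    (fun w hw => (hasDerivAt_sqrt_sq_add_sq (ne_of_gt hw)).hasDerivWithinAt)
    (strictMonoOn_sqrt_sq_add_sq.injOn.mono Ioi_subset_Ici_self)]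
  refine setLIntegral_congr_fun measurableSet_Ioi fun w hw => ?_
  rw [abs_of_nonneg (div_nonneg (le_of_lt hw) (Real.sqrt_nonneg _))]

end Substitution

theorem polarCoord_symm_image_quadrant :
    polarCoord.symm '' (Ioi 0 ×ˢ Ioo 0 (π / 2)) = Ioi (0 : ℝ) ×ˢ Ioi (0 : ℝ) := by
  ext q
  constructor
  · rintro ⟨p, ⟨hr, hθ⟩, rfl⟩
    have hθ' : p.2 ∈ Ioo (-(π / 2)) (π / 2) := ⟨by linarith [hθ.1, pi_pos], hθ.2⟩
    exact ⟨mul_pos hr (cos_pos_of_mem_Ioo hθ'),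
      mul_pos hr (sin_pos_of_pos_of_lt_pi hθ.1 (by linarith [hθ.2, pi_pos]))⟩
  · rintro ⟨hx, hy⟩
    have hq : q ∈ polarCoord.source := Or.inl hx
    refine ⟨polarCoord q, ⟨(polarCoord.map_source hq).1, ?_, ?_⟩, polarCoord.left_inv hq⟩
    · refine lt_of_le_of_ne (Complex.arg_nonneg_iff.2 (by simpa using le_of_lt hy)) fun h => ?_
      exact hy.ne' (by simpa using (Complex.arg_eq_zero_iff.1 h.symm).2)
    · exact Complex.arg_lt_pi_div_two_iff.2 (Or.inl (by simpa using hx))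

theorem lintegral_quadrant_eq_lintegral_polar {F : ℝ × ℝ → ℝ≥0∞} (hF : Measurable F) :
    ∫⁻ w in Ioi 0, ∫⁻ v in Ioi 0, F (w, v)
      = ∫⁻ r in Ioi 0, ∫⁻ θ in Ioo 0 (π / 2), ENNReal.ofReal r * F (r * cos θ, r * sin θ) := by
  have hS : MeasurableSet (Ioi (0 : ℝ) ×ˢ Ioo 0 (π / 2)) := measurableSet_Ioi.prod measurableSet_Ioo
  have hinj : InjOn polarCoord.symm (Ioi (0 : ℝ) ×ˢ Ioo 0 (π / 2)) :=
    polarCoord.symm.injOn.mono <| prod_mono_right <|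
      Ioo_subset_Ioo (by linarith [pi_pos]) (by linarith [pi_pos])
  calc ∫⁻ w in Ioi 0, ∫⁻ v in Ioi 0, F (w, v)
      = ∫⁻ q in polarCoord.symm '' (Ioi 0 ×ˢ Ioo 0 (π / 2)), F q := by
        rw [polarCoord_symm_image_quadrant, Measure.volume_eq_prod, ← Measure.prod_restrict,
          lintegral_prod _ hF.aemeasurable]
    _ = ∫⁻ p in Ioi 0 ×ˢ Ioo 0 (π / 2), ENNReal.ofReal p.1 * F (polarCoord.symm p) := by
        rw [lintegral_image_eq_lintegral_abs_det_fderiv_mul volume hS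
          (fun p _ => (hasFDerivAt_polarCoord_symm p).hasFDerivWithinAt) hinj]
        refine setLIntegral_congr_fun hS fun p hp => ?_
        rw [det_fderivPolarCoordSymm, abs_of_pos hp.1]
    _ = _ := by
        have hmeas : Measurable fun p : ℝ × ℝ => ENNReal.ofReal p.1 * F (polarCoord.symm p) := by
          fun_prop
        rw [Measure.volume_eq_prod, ← Measure.prod_restrict, lintegral_prod _ hmeas.aemeasurable]
        rfl

theorem integral_Ioi_inv_mul_sq_add {A B : ℝ} (hA : 0 < A) (hB : 0 < B) :
    ∫ x in Ioi 0, (A * x ^ 2 + B)⁻¹ = π / (2 * √(A * B)) := by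
  set c := √(B / A)
  have hc : 0 < c := Real.sqrt_pos.2 (div_pos hB hA)
  have hc2 : A * c ^ 2 = B := by
    rw [Real.sq_sqrt (div_pos hB hA).le]; field_simp
  have hcAB : c * √(A * B) = B := by
    rw [← Real.sqrt_mul (div_pos hB hA).le, show B / A * (A * B) = B ^ 2 by field_simp,
      Real.sqrt_sq hB.le]
  have hunit : ∫ x in Ioi 0, (A * (c * x) ^ 2 + B)⁻¹ = B⁻¹ * (π / 2) := by
    have h (x : ℝ) : (A * (c * x) ^ 2 + B)⁻¹ = B⁻¹ * (1 + x ^ 2)⁻¹ := by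
      rw [← mul_inv, mul_add, mul_one, mul_pow, ← mul_assoc, hc2, add_comm]
    simp_rw [h]
    rw [integral_const_mul, integral_Ioi_inv_one_add_sq, arctan_zero, sub_zero]
  have hscale := integral_comp_mul_left_Ioi (fun x => (A * x ^ 2 + B)⁻¹) 0 hc
  rw [mul_zero, hunit, smul_eq_mul, eq_inv_mul_iff_mul_eq₀ hc.ne'] at hscale
  rw [← hscale, eq_div_iff (by positivity),
    show c * (B⁻¹ * (π / 2)) * (2 * √(A * B)) = c * √(A * B) * B⁻¹ * π by ring,
    hcAB, mul_inv_cancel₀ hB.ne', one_mul]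

theorem arctan_image_Ioi_zero : arctan '' Ioi 0 = Ioo 0 (π / 2) := by
  ext θ
  constructor
  · rintro ⟨x, hx, rfl⟩
    exact ⟨arctan_zero ▸ arctan_strictMono hx, arctan_lt_pi_div_two x⟩
  · rintro ⟨h0, hπ⟩
    exact ⟨tan θ, tan_pos_of_pos_of_lt_pi_div_two h0 hπ, arctan_tan (by linarith [pi_pos]) hπ⟩

theorem integral_Ioo_inv_add_mul_cos_sq {a b : ℝ} (ha : 0 < a) (hab : 0 < a + b) :
    ∫ θ in Ioo 0 (π / 2), (a + b * cos θ ^ 2)⁻¹ = π / (2 * √a * √(a + b)) := by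
  rw [← arctan_image_Ioi_zero, integral_image_eq_integral_abs_deriv_smul measurableSet_Ioi
    (fun x _ => (hasDerivAt_arctan' x).hasDerivWithinAt) arctan_injective.injOn,
    mul_assoc, ← Real.sqrt_mul ha.le, ← integral_Ioi_inv_mul_sq_add ha hab]
  refine setIntegral_congr_fun measurableSet_Ioi fun x _ => ?_
  have hx : 0 < 1 + x ^ 2 := by positivity
  rw [abs_of_pos (inv_pos.2 hx), cos_sq_arctan, smul_eq_mul, ← mul_inv]
  congr 1
  field_simp
  ring

theorem integral_Ioo_mul_cos_sq_div_add_mul_cos_sq {a b : ℝ} (ha : 0 ≤ a) (hb : 0 < b) :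
    ∫ θ in Ioo 0 (π / 2), b * cos θ ^ 2 / (a + b * cos θ ^ 2) = π / 2 * (1 - √a / √(a + b)) := by
  have hvol : volume.real (Ioo 0 (π / 2)) = π / 2 := by
    rw [volume_real_Ioo_of_le (by positivity), sub_zero]
  rcases ha.eq_or_lt with rfl | ha
  · rw [Real.sqrt_zero, zero_div, sub_zero, mul_one]
    calc ∫ θ in Ioo 0 (π / 2), b * cos θ ^ 2 / (0 + b * cos θ ^ 2)
        = ∫ θ in Ioo 0 (π / 2), (1 : ℝ) := by
          refine setIntegral_congr_fun measurableSet_Ioo fun θ hθ => ?_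
          have : 0 < cos θ := cos_pos_of_mem_Ioo ⟨by linarith [hθ.1, pi_pos], hθ.2⟩
          rw [zero_add, div_self (by positivity)]
      _ = π / 2 := by rw [setIntegral_const, hvol, smul_eq_mul, mul_one]
  · have hpt : ∀ θ, b * cos θ ^ 2 / (a + b * cos θ ^ 2) = 1 - a * (a + b * cos θ ^ 2)⁻¹ := by
      intro θ
      have : 0 < a + b * cos θ ^ 2 := by positivity
      field_simp
      ring
    have hint : IntegrableOn (fun θ => a * (a + b * cos θ ^ 2)⁻¹) (Ioo 0 (π / 2)) :=
      (Continuous.integrableOn_Icc (by fun_prop (disch := intro θ; positivity))).mono_set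
        Ioo_subset_Icc_self
    simp_rw [hpt]
    rw [integral_sub (integrable_const 1) hint, setIntegral_const, hvol, smul_eq_mul, mul_one,
      integral_const_mul, integral_Ioo_inv_add_mul_cos_sq ha (by positivity)]
    field_simp
    linear_combination Real.mul_self_sqrt ha.le

theorem K1_nonneg (x : ℝ) : 0 ≤ K1 x :=
  integral_nonneg fun _ => (exp_pos _).le

theorem measurable_K1 : Measurable K1 :=
  (StronglyMeasurable.integral_prod_right' (f := fun p : ℝ × ℝ => exp (-p.1 * √(p.2 ^ 2 + 1)))
    (by fun_prop)).measurable

theorem integrableOn_exp_neg_sqrt_sq_add_sq (y : ℝ) :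
    IntegrableOn (fun v => exp (-√(y ^ 2 + v ^ 2))) (Ioi 0) := by
  refine (exp_neg_integrableOn_Ioi 0 one_pos).mono' (by fun_prop) (ae_of_all _ fun v => ?_)
  rw [Real.norm_of_nonneg (exp_pos _).le, neg_one_mul, exp_le_exp, neg_le_neg_iff]
  calc v ≤ |v| := le_abs_self v
    _ = √(v ^ 2) := (Real.sqrt_sq_eq_abs v).symm
    _ ≤ √(y ^ 2 + v ^ 2) := Real.sqrt_le_sqrt (by nlinarith)

theorem mul_K1_eq_integral {y : ℝ} (hy : 0 < y) :
    y * K1 y = ∫ v in Ioi 0, exp (-√(y ^ 2 + v ^ 2)) := by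
  have h := integral_comp_mul_left_Ioi (fun v => exp (-√(y ^ 2 + v ^ 2))) 0 hy
  rw [mul_zero, smul_eq_mul, eq_inv_mul_iff_mul_eq₀ hy.ne'] at h
  rw [← h, K1]
  congr 1
  refine setIntegral_congr_fun measurableSet_Ioi fun k _ => ?_
  rw [show y ^ 2 + (y * k) ^ 2 = y ^ 2 * (k ^ 2 + 1) by ring, Real.sqrt_mul (sq_nonneg y),
    Real.sqrt_sq hy.le, neg_mul]

theorem ofReal_mul_K1 {y : ℝ} (hy : 0 < y) :
    ENNReal.ofReal (y * K1 y) = ∫⁻ v in Ioi 0, ENNReal.ofReal (exp (-√(y ^ 2 + v ^ 2))) := by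
  rw [mul_K1_eq_integral hy, ofReal_integral_eq_lintegral_ofReal
    (integrableOn_exp_neg_sqrt_sq_add_sq y) (ae_of_all _ fun _ => (exp_pos _).le)]

theorem lintegral_ofReal_K1_mul {s : ℝ} (hs : 0 ≤ s) {G : ℝ → ℝ≥0∞} (hG : Measurable G) :
    ∫⁻ y in Ioi s, ENNReal.ofReal (K1 y) * G √(y ^ 2 - s ^ 2)
      = ∫⁻ r in Ioi 0, ENNReal.ofReal (r * exp (-√(s ^ 2 + r ^ 2))) *
          ∫⁻ θ in Ioo 0 (π / 2), ENNReal.ofReal (r * cos θ / (s ^ 2 + (r * cos θ) ^ 2)) *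
            G (r * cos θ) := by
  set H : ℝ → ℝ≥0∞ := fun w => ENNReal.ofReal (w / (s ^ 2 + w ^ 2)) * G w
  calc ∫⁻ y in Ioi s, ENNReal.ofReal (K1 y) * G √(y ^ 2 - s ^ 2)
      = ∫⁻ w in Ioi 0, ∫⁻ v in Ioi 0, H w * ENNReal.ofReal (exp (-√(s ^ 2 + w ^ 2 + v ^ 2))) := by
        rw [lintegral_Ioi_eq_lintegral_sqrt_sq_add_sq hs]
        refine setLIntegral_congr_fun measurableSet_Ioi fun w hw => ?_
        have hρ2 : √(s ^ 2 + w ^ 2) ^ 2 = s ^ 2 + w ^ 2 := Real.sq_sqrt (by positivity)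
        set ρ := √(s ^ 2 + w ^ 2)
        have hρ : 0 < ρ := Real.sqrt_pos.2 (by positivity [mem_Ioi.1 hw])
        have hK : ENNReal.ofReal (w / ρ) * ENNReal.ofReal (K1 ρ)
            = ENNReal.ofReal (w / (s ^ 2 + w ^ 2)) * ENNReal.ofReal (ρ * K1 ρ) := by
          rw [← ENNReal.ofReal_mul (div_nonneg (le_of_lt hw) hρ.le),
            ← ENNReal.ofReal_mul (by positivity [mem_Ioi.1 hw]), ← hρ2]
          congr 1
          field_simp
        rw [← mul_assoc, hK, ofReal_mul_K1 hρ, mul_right_comm,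
          ← lintegral_const_mul _ (by fun_prop), hρ2, add_sub_cancel_left,
          Real.sqrt_sq (le_of_lt hw)]
    _ = ∫⁻ r in Ioi 0, ∫⁻ θ in Ioo 0 (π / 2), ENNReal.ofReal r * (H (r * cos θ) *
          ENNReal.ofReal (exp (-√(s ^ 2 + (r * cos θ) ^ 2 + (r * sin θ) ^ 2)))) :=
        lintegral_quadrant_eq_lintegral_polar
          (F := fun p => H p.1 * ENNReal.ofReal (exp (-√(s ^ 2 + p.1 ^ 2 + p.2 ^ 2)))) (by fun_prop)
    _ = _ := by
        refine setLIntegral_congr_fun measurableSet_Ioi fun r hr => ?_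
        rw [← lintegral_const_mul _ (by fun_prop)]
        refine setLIntegral_congr_fun measurableSet_Ioo fun θ _ => ?_
        rw [show s ^ 2 + (r * cos θ) ^ 2 + (r * sin θ) ^ 2 = s ^ 2 + r ^ 2 by
          linear_combination r ^ 2 * sin_sq_add_cos_sq θ, ENNReal.ofReal_mul (le_of_lt hr)]
        ring

section OfReal

variable {α : Type*} [MeasurableSpace α] {μ : Measure α} {f : α → ℝ} {c : ℝ}

theorem lintegral_ofReal_eq_of_integral_eq (hf : 0 ≤ᵐ[μ] f) (h : ∫ a, f a ∂μ = c) (hc : c ≠ 0) :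
    ∫⁻ a, ENNReal.ofReal (f a) ∂μ = ENNReal.ofReal c := by
  rw [← ofReal_integral_eq_lintegral_ofReal (.of_integral_ne_zero (h ▸ hc)) hf, h]

theorem integral_eq_of_lintegral_ofReal_eq (hf : 0 ≤ᵐ[μ] f) (hfm : AEStronglyMeasurable f μ)
    (hc : 0 ≤ c) (h : ∫⁻ a, ENNReal.ofReal (f a) ∂μ = ENNReal.ofReal c) : ∫ a, f a ∂μ = c := by
  rw [integral_eq_lintegral_of_nonneg_ae hf hfm, h, ENNReal.toReal_ofReal hc]

end OfReal

theorem lintegral_Ioo_ofReal_mul_cos_sq_div {s r : ℝ} (hs : 0 ≤ s) (hr : 0 < r) :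
    ∫⁻ θ in Ioo 0 (π / 2), ENNReal.ofReal ((r * cos θ) ^ 2 / (s ^ 2 + (r * cos θ) ^ 2))
      = ENNReal.ofReal (π / 2 * (1 - s / √(s ^ 2 + r ^ 2))) := by
  have hsρ : s / √(s ^ 2 + r ^ 2) < 1 :=
    (div_lt_one (by positivity)).2 ((Real.lt_sqrt hs).2 (by nlinarith))
  have h := integral_Ioo_mul_cos_sq_div_add_mul_cos_sq (sq_nonneg s) (pow_pos hr 2)
  simp_rw [Real.sqrt_sq hs, ← mul_pow] at h
  exact lintegral_ofReal_eq_of_integral_eq (ae_of_all _ fun θ => by positivity) h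
    (mul_pos (by positivity) (sub_pos.2 hsρ)).ne'

theorem lintegral_Ioo_ofReal_inv_sq_add_mul_cos_sq {s : ℝ} (hs : 0 < s) (r : ℝ) :
    ∫⁻ θ in Ioo 0 (π / 2), ENNReal.ofReal (s ^ 2 + (r * cos θ) ^ 2)⁻¹
      = ENNReal.ofReal (π / (2 * s * √(s ^ 2 + r ^ 2))) := by
  have h := integral_Ioo_inv_add_mul_cos_sq (pow_pos hs 2) (by positivity : 0 < s ^ 2 + r ^ 2)
  simp_rw [Real.sqrt_sq hs.le, ← mul_pow] at h
  exact lintegral_ofReal_eq_of_integral_eq (ae_of_all _ fun θ => by positivity) h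
    (by positivity)

theorem integral_Ioi_sub_mul_exp_neg (s : ℝ) : ∫ y in Ioi s, (y - s) * exp (-y) = exp (-s) := by
  have hderiv (y : ℝ) : HasDerivAt (fun y => -((y - s + 1) * exp (-y))) ((y - s) * exp (-y)) y := by
    refine ((((hasDerivAt_id' y).sub_const s).add_const 1).fun_mul
      (hasDerivAt_neg' y).exp).fun_neg.congr_deriv ?_
    ring
  have hlim : Tendsto (fun y => -((y - s + 1) * exp (-y))) atTop (𝓝 0) := by
    have h := (tendsto_pow_mul_exp_neg_atTop_nhds_zero 1).add
      (tendsto_exp_neg_atTop_nhds_zero.const_mul (1 - s))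
    rw [mul_zero, add_zero] at h
    convert h.neg using 2 with y
    · ring
    · rw [neg_zero]
  rw [integral_Ioi_of_hasDerivAt_of_nonneg (hderiv s).continuousAt.continuousWithinAt
    (fun y _ => hderiv y) (fun y hy => mul_nonneg (sub_nonneg.2 (le_of_lt hy)) (exp_pos _).le) hlim]
  ring

theorem lintegral_ofReal_K1_mul_sqrt_sq_sub_sq {s : ℝ} (hs : 0 ≤ s) :
    ∫⁻ y in Ioi s, ENNReal.ofReal (K1 y * √(y ^ 2 - s ^ 2))
      = ENNReal.ofReal (π / 2 * exp (-s)) := by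
  calc ∫⁻ y in Ioi s, ENNReal.ofReal (K1 y * √(y ^ 2 - s ^ 2))
      = ∫⁻ y in Ioi s, ENNReal.ofReal (K1 y) * ENNReal.ofReal √(y ^ 2 - s ^ 2) := by
        simp_rw [ENNReal.ofReal_mul (K1_nonneg _)]
    _ = ∫⁻ r in Ioi 0, ENNReal.ofReal (r * exp (-√(s ^ 2 + r ^ 2))) *
          ∫⁻ θ in Ioo 0 (π / 2), ENNReal.ofReal ((r * cos θ) ^ 2 / (s ^ 2 + (r * cos θ) ^ 2)) := by
        rw [lintegral_ofReal_K1_mul hs ENNReal.measurable_ofReal]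
        refine setLIntegral_congr_fun measurableSet_Ioi fun r hr => ?_
        congr 1
        refine setLIntegral_congr_fun measurableSet_Ioo fun θ hθ => ?_
        have : 0 < cos θ := cos_pos_of_mem_Ioo ⟨by linarith [hθ.1, pi_pos], hθ.2⟩
        rw [← ENNReal.ofReal_mul (by positivity [mem_Ioi.1 hr])]
        congr 1
        ring
    _ = ∫⁻ r in Ioi 0, ENNReal.ofReal (r / √(s ^ 2 + r ^ 2)) *
          ENNReal.ofReal (π / 2 * ((√(s ^ 2 + r ^ 2) - s) * exp (-√(s ^ 2 + r ^ 2)))) := by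
        refine setLIntegral_congr_fun measurableSet_Ioi fun r hr => ?_
        have hρ : 0 < √(s ^ 2 + r ^ 2) := by positivity [mem_Ioi.1 hr]
        rw [lintegral_Ioo_ofReal_mul_cos_sq_div hs hr,
          ← ENNReal.ofReal_mul (by positivity [mem_Ioi.1 hr]),
          ← ENNReal.ofReal_mul (by positivity [mem_Ioi.1 hr])]
        congr 1
        field_simp
    _ = ∫⁻ y in Ioi s, ENNReal.ofReal (π / 2 * ((y - s) * exp (-y))) :=
        (lintegral_Ioi_eq_lintegral_sqrt_sq_add_sq hs
          fun y => ENNReal.ofReal (π / 2 * ((y - s) * exp (-y)))).symm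
    _ = ENNReal.ofReal (π / 2 * exp (-s)) :=
        lintegral_ofReal_eq_of_integral_eq
          ((ae_restrict_iff' measurableSet_Ioi).2 (ae_of_all _ fun y hy =>
            mul_nonneg (by positivity) (mul_nonneg (sub_nonneg.2 (le_of_lt hy)) (exp_pos _).le)))
          (by rw [integral_const_mul, integral_Ioi_sub_mul_exp_neg]) (by positivity)

theorem lintegral_ofReal_K1_div_sqrt_sq_sub_sq {s : ℝ} (hs : 0 < s) :
    ∫⁻ y in Ioi s, ENNReal.ofReal (K1 y / √(y ^ 2 - s ^ 2))
      = ENNReal.ofReal (π / (2 * s) * exp (-s)) := by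
  calc ∫⁻ y in Ioi s, ENNReal.ofReal (K1 y / √(y ^ 2 - s ^ 2))
      = ∫⁻ y in Ioi s, ENNReal.ofReal (K1 y) * ENNReal.ofReal (√(y ^ 2 - s ^ 2))⁻¹ := by
        simp_rw [div_eq_mul_inv, ENNReal.ofReal_mul (K1_nonneg _)]
    _ = ∫⁻ r in Ioi 0, ENNReal.ofReal (r * exp (-√(s ^ 2 + r ^ 2))) *
          ∫⁻ θ in Ioo 0 (π / 2), ENNReal.ofReal (s ^ 2 + (r * cos θ) ^ 2)⁻¹ := by
        rw [lintegral_ofReal_K1_mul hs.le (G := fun w => ENNReal.ofReal w⁻¹) (by fun_prop)]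
        refine setLIntegral_congr_fun measurableSet_Ioi fun r hr => ?_
        congr 1
        refine setLIntegral_congr_fun measurableSet_Ioo fun θ hθ => ?_
        have : 0 < cos θ := cos_pos_of_mem_Ioo ⟨by linarith [hθ.1, pi_pos], hθ.2⟩
        have hr0 : 0 < r := hr
        rw [← ENNReal.ofReal_mul (by positivity)]
        congr 1
        field_simp
    _ = ∫⁻ r in Ioi 0, ENNReal.ofReal (r / √(s ^ 2 + r ^ 2)) *
          ENNReal.ofReal (π / (2 * s) * exp (-√(s ^ 2 + r ^ 2))) := by
        refine setLIntegral_congr_fun measurableSet_Ioi fun r hr => ?_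
        have hρ : 0 < √(s ^ 2 + r ^ 2) := by positivity [mem_Ioi.1 hr]
        rw [lintegral_Ioo_ofReal_inv_sq_add_mul_cos_sq hs,
          ← ENNReal.ofReal_mul (by positivity [mem_Ioi.1 hr]),
          ← ENNReal.ofReal_mul (by positivity [mem_Ioi.1 hr])]
        congr 1
        field_simp
    _ = ∫⁻ y in Ioi s, ENNReal.ofReal (π / (2 * s) * exp (-y)) :=
        (lintegral_Ioi_eq_lintegral_sqrt_sq_add_sq hs.le
          fun y => ENNReal.ofReal (π / (2 * s) * exp (-y))).symm
    _ = ENNReal.ofReal (π / (2 * s) * exp (-s)) :=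
        lintegral_ofReal_eq_of_integral_eq (ae_of_all _ fun y => by positivity)
          (by rw [integral_const_mul, integral_exp_neg_Ioi]) (by positivity)

theorem integral_K1_mul_sqrt_sq_sub_sq {s : ℝ} (hs : 0 ≤ s) :
    ∫ y in Ioi s, K1 y * √(y ^ 2 - s ^ 2) = π / 2 * exp (-s) :=
  integral_eq_of_lintegral_ofReal_eq
    (ae_of_all _ fun y => mul_nonneg (K1_nonneg y) (Real.sqrt_nonneg _))
    (measurable_K1.mul (by fun_prop)).aestronglyMeasurable (by positivity)
    (lintegral_ofReal_K1_mul_sqrt_sq_sub_sq hs)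

theorem integral_K1_div_sqrt_sq_sub_sq {s : ℝ} (hs : 0 < s) :
    ∫ y in Ioi s, K1 y / √(y ^ 2 - s ^ 2) = π / (2 * s) * exp (-s) :=
  integral_eq_of_lintegral_ofReal_eq
    (ae_of_all _ fun y => div_nonneg (K1_nonneg y) (Real.sqrt_nonneg _))
    (measurable_K1.div (by fun_prop)).aestronglyMeasurable (by positivity)
    (lintegral_ofReal_K1_div_sqrt_sq_sub_sq hs)

theorem besselK1_integral_closed_form :
    (∀ s : ℝ, 0 ≤ s →
      (∫ y in Set.Ioi s, K1 y * Real.sqrt (y ^ 2 - s ^ 2)) = (π / 2) * Real.exp (-s)) ∧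
    (∀ s : ℝ, 0 < s →
      (∫ y in Set.Ioi s, K1 y * Real.sqrt (y ^ 2 - s ^ 2))
        = s * ∫ y in Set.Ioi s, K1 y / Real.sqrt (y ^ 2 - s ^ 2)) := by
  refine ⟨fun s hs => integral_K1_mul_sqrt_sq_sub_sq hs, fun s hs => ?_⟩
  rw [integral_K1_mul_sqrt_sq_sub_sq hs.le, integral_K1_div_sqrt_sq_sub_sq hs]
  field_simp
end
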